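/- Let N = p_1^{n_1} ··· p_a^{n_a} with a ≥ 2. Then a - 1 ≤ dim_TH(Γ(Z_N)) ≤ a, where dim_TH is the threshold dimension. -/

import Mathlib

def IsIntervalGraph {V : Type*} (G : SimpleGraph V) : Prop :=
  ∃ a b : V → ℝ, ∀ u v : V, u ≠ v →
    (G.Adj u v ↔ (Set.Icc (a u) (b u) ∩ Set.Icc (a v) (b v)).Nonempty)

def IsThresholdGraph {V : Type*} (G : SimpleGraph V) : Prop :=
  ∃ (w : V → ℝ) (S : ℝ), ∀ u v : V, u ≠ v → (G.Adj u v ↔ S ≤ w u + w v)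

noncomputable def boxicity {V : Type*} (G : SimpleGraph V) : ℕ :=
  sInf {d : ℕ | ∃ I : Fin d → SimpleGraph V, (∀ i, IsIntervalGraph (I i)) ∧
    ∀ u v : V, G.Adj u v ↔ (u ≠ v ∧ ∀ i, (I i).Adj u v)}

noncomputable def thresholdDim {V : Type*} (G : SimpleGraph V) : ℕ :=
  sInf {d : ℕ | ∃ I : Fin d → SimpleGraph V, (∀ i, IsThresholdGraph (I i)) ∧
    ∀ u v : V, G.Adj u v ↔ (u ≠ v ∧ ∀ i, (I i).Adj u v)}

def zeroDivisorGraph (R : Type*) [CommRing R] :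
    SimpleGraph {x : R // x ≠ 0 ∧ ∃ y : R, y ≠ 0 ∧ x * y = 0} :=
  SimpleGraph.fromRel (fun a b => (a : R) * (b : R) = 0)

/-!
Write `N = ∏ qᵢ` with `qᵢ = pᵢ ^ nᵢ`. For the upper bound, `u v ≡ 0 (mod N)` iff `qᵢ ∣ u v` for
every `i`, and `qᵢ ∣ u v` is a threshold condition with weights `min (v_{pᵢ}(u), nᵢ)` and
threshold `nᵢ`.

For the lower bound, if `x₁ y₁` and `x₂ y₂` are non-edges of a threshold graph, then `x₁ y₂` and
`x₂ y₁` cannot both be edges (add up the weights). With the cofactors `Mⱼ = N / qⱼ`, the vertices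
`Mⱼ` and `-Mⱼ` are non-adjacent while `Mⱼ` and `-Mₗ` are adjacent for `j ≠ l`, so each such
non-edge needs a threshold graph of its own. This needs `Mⱼ ≠ -Mⱼ`, i.e. `qⱼ ≥ 3`, which
holds for all primes but the smallest.
-/

open Finset Function

section ThresholdCover

variable {V : Type*}

def HasThresholdCover (G : SimpleGraph V) (d : ℕ) : Prop :=
  ∃ I : Fin d → SimpleGraph V, (∀ i, IsThresholdGraph (I i)) ∧
    ∀ u v : V, G.Adj u v ↔ (u ≠ v ∧ ∀ i, (I i).Adj u v)

theorem thresholdDim_eq_sInf (G : SimpleGraph V) :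
    thresholdDim G = sInf {d | HasThresholdCover G d} := rfl

def thresholdGraph (w : V → ℝ) (S : ℝ) : SimpleGraph V where
  Adj u v := u ≠ v ∧ S ≤ w u + w v
  symm := ⟨fun u v h => ⟨h.1.symm, add_comm (w u) (w v) ▸ h.2⟩⟩
  loopless := ⟨fun _ h => h.1 rfl⟩

theorem isThresholdGraph_thresholdGraph (w : V → ℝ) (S : ℝ) :
    IsThresholdGraph (thresholdGraph w S) :=
  ⟨w, S, fun _ _ huv => and_iff_right (a := _ ≠ _) huv⟩

theorem IsThresholdGraph.adj_or_adj_of_adj_of_adj {H : SimpleGraph V} (hH : IsThresholdGraph H)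
    {a b c d : V} (hab : a ≠ b) (hcd : c ≠ d) (had : H.Adj a d) (hcb : H.Adj c b) :
    H.Adj a b ∨ H.Adj c d := by
  obtain ⟨w, S, hw⟩ := hH
  rw [hw a d had.ne] at had
  rw [hw c b hcb.ne] at hcb
  rw [hw a b hab, hw c d hcd]
  by_contra! h
  linarith [h.1, h.2]

theorem HasThresholdCover.le_of_crossAdj {G : SimpleGraph V} {d k : ℕ}
    (hG : HasThresholdCover G d) (x y : Fin k → V) (hxy : ∀ j, x j ≠ y j)
    (hnadj : ∀ j, ¬ G.Adj (x j) (y j)) (hcross : ∀ j l, j ≠ l → G.Adj (x j) (y l)) :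
    k ≤ d := by
  obtain ⟨I, hI, hGI⟩ := hG
  have hmiss : ∀ j, ∃ i, ¬ (I i).Adj (x j) (y j) := fun j => by
    by_contra! h
    exact hnadj j ((hGI _ _).2 ⟨hxy j, h⟩)
  choose σ hσ using hmiss
  refine Fin.le_of_injective σ fun j l hjl => ?_
  by_contra hne
  have hjl' := ((hGI _ _).1 (hcross j l hne)).2 (σ j)
  have hlj := ((hGI _ _).1 (hcross l j (Ne.symm hne))).2 (σ l)
  rw [← hjl] at hlj
  rcases (hI (σ j)).adj_or_adj_of_adj_of_adj (hxy j) (hxy l) hjl' hlj with h | h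
  · exact hσ j h
  · exact hσ l (hjl ▸ h)

end ThresholdCover

section ZeroDivisorGraph

variable {R : Type*} [CommRing R]

theorem zeroDivisorGraph_adj {u v : {x : R // x ≠ 0 ∧ ∃ y : R, y ≠ 0 ∧ x * y = 0}} :
    (zeroDivisorGraph R).Adj u v ↔ u ≠ v ∧ (u : R) * v = 0 := by
  rw [zeroDivisorGraph, SimpleGraph.fromRel_adj, mul_comm (v : R), or_self]

theorem HasThresholdCover.le_of_zeroDivisorGraph {d k : ℕ}
    (hG : HasThresholdCover (zeroDivisorGraph R) d) (e : Fin k → R)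
    (hzd : ∀ j, ∃ y : R, y ≠ 0 ∧ e j * y = 0) (hsq : ∀ j, e j * e j ≠ 0)
    (horth : ∀ j l, j ≠ l → e j * e l = 0) (hadd : ∀ j l, e j + e l ≠ 0) : k ≤ d := by
  have he : ∀ j, e j ≠ 0 := fun j => left_ne_zero_of_mul (hsq j)
  let x : Fin k → {x : R // x ≠ 0 ∧ ∃ y : R, y ≠ 0 ∧ x * y = 0} := fun j => ⟨e j, he j, hzd j⟩
  let y : Fin k → {x : R // x ≠ 0 ∧ ∃ y : R, y ≠ 0 ∧ x * y = 0} := fun j =>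
    ⟨-e j, neg_ne_zero.2 (he j),
      (hzd j).imp fun z hz => ⟨hz.1, by rw [neg_mul, hz.2, neg_zero]⟩⟩
  have hxy : ∀ j l, x j ≠ y l := fun j l h =>
    hadd j l (eq_neg_iff_add_eq_zero.1 (congrArg Subtype.val h))
  refine hG.le_of_crossAdj x y (fun j => hxy j j) (fun j h => ?_) fun j l hjl => ?_
  · exact hsq j (by simpa [x, y] using (zeroDivisorGraph_adj.1 h).2)
  · exact zeroDivisorGraph_adj.2 ⟨hxy j l, by simp [x, y, horth j l hjl]⟩

end ZeroDivisorGraph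

theorem prod_dvd_iff_of_pairwise_coprime {ι : Type*} [Fintype ι] {q : ι → ℕ}
    (hq : Pairwise (Nat.Coprime on q)) {m : ℕ} : ∏ i, q i ∣ m ↔ ∀ i, q i ∣ m := by
  refine ⟨fun h i => (dvd_prod_of_mem q (mem_univ i)).trans h, fun h => ?_⟩
  have := Fintype.prod_dvd_of_coprime (s := fun i => (q i : ℤ)) (fun _ _ hij => (hq hij).cast)
    fun i => Int.natCast_dvd_natCast.2 (h i)
  exact_mod_cast this

theorem pairwise_coprime_pow_of_injective {ι : Type*} {p : ι → ℕ} (hp : ∀ i, (p i).Prime)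
    (hinj : Injective p) (n : ι → ℕ) : Pairwise (Nat.Coprime on fun i => p i ^ n i) :=
  fun i j hij => Nat.coprime_pow_primes _ _ (hp i) (hp j) (hinj.ne hij)

theorem pow_dvd_mul_iff_le_min_add_min {p k m n : ℕ} (hp : p.Prime) (hm : m ≠ 0) (hn : n ≠ 0) :
    p ^ k ∣ m * n ↔ k ≤ min (m.factorization p) k + min (n.factorization p) k := by
  rw [hp.pow_dvd_iff_le_factorization (mul_ne_zero hm hn), Nat.factorization_mul hm hn,
    Finsupp.add_apply]
  omega

section Cofactor

variable {ι : Type*} [Fintype ι] [DecidableEq ι] (q : ι → ℕ)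

def cofactor (j : ι) : ℕ := ∏ i ∈ univ.erase j, q i

theorem mul_cofactor (j : ι) : q j * cofactor q j = ∏ i, q i :=
  mul_prod_erase _ _ (mem_univ j)

theorem prod_dvd_cofactor_mul_cofactor {j l : ι} (hjl : j ≠ l) :
    ∏ i, q i ∣ cofactor q j * cofactor q l := by
  rw [← mul_cofactor q j, mul_comm (q j)]
  exact mul_dvd_mul_left _ (dvd_prod_of_mem _ (mem_erase.2 ⟨hjl, mem_univ j⟩))

theorem coprime_cofactor (hq : Pairwise (Nat.Coprime on q)) (j : ι) :
    Nat.Coprime (q j) (cofactor q j) :=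
  Nat.Coprime.prod_right fun _ hi => hq (mem_erase.1 hi).1.symm

theorem not_prod_dvd_cofactor_mul_self (hq : Pairwise (Nat.Coprime on q)) {j : ι}
    (hj : q j ≠ 1) : ¬ ∏ i, q i ∣ cofactor q j * cofactor q j := fun h =>
  hj (Nat.Coprime.eq_one_of_dvd ((coprime_cofactor q hq j).mul_right (coprime_cofactor q hq j))
    ((Dvd.intro _ (mul_cofactor q j)).trans h))

theorem three_mul_cofactor_le {j : ι} (hj : 3 ≤ q j) :
    3 * cofactor q j ≤ ∏ i, q i :=
  mul_cofactor q j ▸ Nat.mul_le_mul_right _ hj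

theorem cofactor_pos (hq0 : ∀ i, q i ≠ 0) (j : ι) : 0 < cofactor q j :=
  prod_pos fun i _ => Nat.pos_of_ne_zero (hq0 i)

theorem natCast_cofactor_mul_natCast_cofactor {j l : ι} (hjl : j ≠ l) :
    (cofactor q j : ZMod (∏ i, q i)) * cofactor q l = 0 := by
  rw [← Nat.cast_mul, ZMod.natCast_eq_zero_iff]
  exact prod_dvd_cofactor_mul_cofactor q hjl

theorem natCast_cofactor_mul_self_ne_zero (hq : Pairwise (Nat.Coprime on q)) {j : ι}
    (hj : q j ≠ 1) : (cofactor q j : ZMod (∏ i, q i)) * cofactor q j ≠ 0 := by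
  rw [← Nat.cast_mul, Ne, ZMod.natCast_eq_zero_iff]
  exact not_prod_dvd_cofactor_mul_self q hq hj

theorem natCast_cofactor_add_natCast_cofactor_ne_zero (hq0 : ∀ i, q i ≠ 0) {j l : ι}
    (hj : 3 ≤ q j) (hl : 3 ≤ q l) : (cofactor q j : ZMod (∏ i, q i)) + cofactor q l ≠ 0 := by
  rw [← Nat.cast_add, Ne, ZMod.natCast_eq_zero_iff]
  intro h
  have := Nat.le_of_dvd (Nat.add_pos_left (cofactor_pos q hq0 j) _) h
  have := three_mul_cofactor_le q hj
  have := three_mul_cofactor_le q hl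
  have := cofactor_pos q hq0 j
  omega

end Cofactor

theorem hasThresholdCover_zeroDivisorGraph_zmod_prod_pow {a : ℕ} {p : Fin a → ℕ}
    (hp : ∀ i, (p i).Prime) (hinj : Injective p) (n : Fin a → ℕ) :
    HasThresholdCover (zeroDivisorGraph (ZMod (∏ i, p i ^ n i))) a := by
  set N := ∏ i, p i ^ n i
  have : NeZero N := ⟨prod_ne_zero_iff.2 fun i _ => pow_ne_zero _ (hp i).ne_zero⟩
  let w : Fin a → {x : ZMod N // x ≠ 0 ∧ ∃ y : ZMod N, y ≠ 0 ∧ x * y = 0} → ℝ :=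
    fun i u => (min ((u : ZMod N).val.factorization (p i)) (n i) : ℕ)
  refine ⟨fun i => thresholdGraph (w i) (n i), fun i => isThresholdGraph_thresholdGraph _ _,
    fun u v => ?_⟩
  have hu : (u : ZMod N).val ≠ 0 := (ZMod.val_ne_zero _).2 u.2.1
  have hv : (v : ZMod N).val ≠ 0 := (ZMod.val_ne_zero _).2 v.2.1
  have hmul : (u : ZMod N) * v = 0 ↔ ∀ i, (n i : ℝ) ≤ w i u + w i v := by
    rw [← ZMod.natCast_zmod_val (u : ZMod N), ← ZMod.natCast_zmod_val (v : ZMod N),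
      ← Nat.cast_mul, ZMod.natCast_eq_zero_iff,
      prod_dvd_iff_of_pairwise_coprime (pairwise_coprime_pow_of_injective hp hinj n)]
    refine forall_congr' fun i => ?_
    rw [pow_dvd_mul_iff_le_min_add_min (hp i) hu hv]
    simp only [w]
    norm_cast
  simp only [zeroDivisorGraph_adj, thresholdGraph, hmul]
  exact and_congr_right fun huv => forall_congr' fun _ => (and_iff_right huv).symm

theorem HasThresholdCover.sub_one_le_of_zeroDivisorGraph_zmod_prod_pow {a d : ℕ} {p : Fin a → ℕ}
    (hp : ∀ i, (p i).Prime) (hmono : StrictMono p) {n : Fin a → ℕ} (hn : ∀ i, 0 < n i)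
    (hG : HasThresholdCover (zeroDivisorGraph (ZMod (∏ i, p i ^ n i))) d) : a - 1 ≤ d := by
  cases a with
  | zero => exact Nat.zero_le _
  | succ b =>
    let q : Fin (b + 1) → ℕ := fun i => p i ^ n i
    have hq : Pairwise (Nat.Coprime on q) := pairwise_coprime_pow_of_injective hp hmono.injective n
    have hq0 : ∀ i, q i ≠ 0 := fun i => pow_ne_zero _ (hp i).ne_zero
    have hq1 : ∀ i, q i ≠ 1 := fun i => (Nat.one_lt_pow (hn i).ne' (hp i).one_lt).ne'
    have hq3 : ∀ j : Fin b, 3 ≤ q j.succ := fun j =>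
      calc 3 ≤ p j.succ := (hp 0).two_le.trans_lt (hmono (Fin.succ_pos j))
        _ ≤ q j.succ := Nat.le_self_pow (hn _).ne' _
    let e : Fin (b + 1) → ZMod (∏ i, q i) := fun i => cofactor q i
    rw [Nat.add_sub_cancel]
    refine hG.le_of_zeroDivisorGraph (e ∘ Fin.succ)
      (fun j => ⟨e 0, left_ne_zero_of_mul (natCast_cofactor_mul_self_ne_zero q hq (hq1 0)),
        natCast_cofactor_mul_natCast_cofactor q (Fin.succ_ne_zero j)⟩)
      (fun j => natCast_cofactor_mul_self_ne_zero q hq (hq1 _))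
      (fun j l hjl => natCast_cofactor_mul_natCast_cofactor q (Fin.succ_injective _ |>.ne hjl))
      (fun j l => natCast_cofactor_add_natCast_cofactor_ne_zero q hq0 (hq3 j) (hq3 l))

theorem stmt_13_general (N a : ℕ) (p n : Fin a → ℕ)
    (hp : ∀ i, (p i).Prime) (hmono : StrictMono p) (hn : ∀ i, 0 < n i)
    (hN : N = ∏ i, p i ^ n i) :
    a - 1 ≤ thresholdDim (zeroDivisorGraph (ZMod N)) ∧
    thresholdDim (zeroDivisorGraph (ZMod N)) ≤ a := by
  subst hN
  have hcover := hasThresholdCover_zeroDivisorGraph_zmod_prod_pow hp hmono.injective n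
  rw [thresholdDim_eq_sInf]
  exact ⟨le_csInf ⟨a, hcover⟩ fun _ hd =>
    hd.sub_one_le_of_zeroDivisorGraph_zmod_prod_pow hp hmono hn, Nat.sInf_le hcover⟩

theorem stmt_13 (N a : ℕ) (p n : Fin a → ℕ) (ha : 2 ≤ a)
    (hp : ∀ i, (p i).Prime) (hmono : StrictMono p) (hn : ∀ i, 0 < n i)
    (hN : N = ∏ i, p i ^ n i) :
    a - 1 ≤ thresholdDim (zeroDivisorGraph (ZMod N)) ∧
    thresholdDim (zeroDivisorGraph (ZMod N)) ≤ a :=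
  stmt_13_general N a p n hp hmono hn hN
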